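/- arXiv:1703.01911 — 2 statements merged into one kernel-verified Lean document; each statement's English description precedes it below -/
import Mathlib

section
/- Let α ∈ [2,3) and a_α := −cos(απ/2) > 0. For every k ∈ ℕ there exists a constant C_k > 0 such that for all ξ ≥ 1, the k-th derivative of the function ξ ↦ ξ/√(1 + a_α ξ^α) satisfies |d^k/dξ^k [ξ/√(1 + a_α ξ^α)]| ≤ C_k · ξ^{1 − α/2 − k}. -/
/-!
For `x > 0` and `u = a x ^ α`, one has `x · du/dx = α u`, so differentiating
`x ^ (1 - k) · P(u) · (1 + u) ^ (-1/2 - k)` gives an expression of the same shape with `k + 1`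
and a polynomial of degree one higher. Starting from `x / √(1 + u)` (`k = 0`, `P = 1`), the
`k`-th derivative is `x ^ (1 - k) · P_k(u) · (1 + u) ^ (-1/2 - k)` with `deg P_k ≤ k`. Since
`|P_k(u)| ≲ (1 + u) ^ k`, it is bounded by a multiple of
`x ^ (1 - k) (1 + u) ^ (-1/2) ≤ x ^ (1 - k) (a x ^ α) ^ (-1/2) = a ^ (-1/2) x ^ (1 - α/2 - k)`.
-/

open Real

/-- The constant `a_α := -cos(απ/2)` appearing in the fractional Eringen wave equation. -/
noncomputable def aCoef (α : ℝ) : ℝ := -Real.cos (α * Real.pi / 2)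

open Polynomial

theorem Polynomial.natDegree_X_mul_derivative_le {R : Type*} [Semiring R] (p : R[X]) :
    (X * derivative p).natDegree ≤ p.natDegree := by
  rcases Nat.eq_zero_or_pos p.natDegree with hp | hp
  · simp [derivative_of_natDegree_zero hp]
  · have := natDegree_mul_le_of_le (natDegree_X_le (R := R)) (natDegree_derivative_le p)
    omega

theorem Polynomial.abs_eval_le_of_natDegree_le {p : ℝ[X]} {n : ℕ} (hp : p.natDegree ≤ n)
    {u : ℝ} (hu : 0 ≤ u) :
    |p.eval u| ≤ (∑ i ∈ Finset.range (n + 1), |p.coeff i|) * (1 + u) ^ n := by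
  rw [eval_eq_sum_range' (Nat.lt_succ_of_le hp), Finset.sum_mul]
  refine (Finset.abs_sum_le_sum_abs _ _).trans (Finset.sum_le_sum fun i hi => ?_)
  rw [abs_mul, abs_pow, abs_of_nonneg hu]
  gcongr
  calc u ^ i ≤ (1 + u) ^ i := by gcongr; linarith
    _ ≤ (1 + u) ^ n := pow_le_pow_right₀ (by linarith) (Finset.mem_range_succ_iff.mp hi)

namespace EringenSymbol

noncomputable def derivTerm (a α : ℝ) (k : ℕ) (p : ℝ[X]) (x : ℝ) : ℝ :=
  x ^ (1 - (k : ℝ)) * p.eval (a * x ^ α) * (1 + a * x ^ α) ^ (-(1 / 2 : ℝ) - k)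

-- The product rule applied to `derivTerm a α k p`, after using `x · d/dx (a x ^ α) = α · a x ^ α`.
noncomputable def derivPolyStep (α : ℝ) (k : ℕ) (p : ℝ[X]) : ℝ[X] :=
  C (1 - (k : ℝ)) * p * (1 + X) + C α * (X * derivative p * (1 + X))
    - C (((k : ℝ) + 1 / 2) * α) * (X * p)

noncomputable def derivPoly (α : ℝ) : ℕ → ℝ[X]
  | 0 => 1
  | k + 1 => derivPolyStep α k (derivPoly α k)

theorem natDegree_derivPolyStep_le (α : ℝ) {k : ℕ} {p : ℝ[X]} (hp : p.natDegree ≤ k) :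
    (derivPolyStep α k p).natDegree ≤ k + 1 := by
  have h1X : (1 + X : ℝ[X]).natDegree ≤ 1 := by compute_degree!
  have hXp : (X * p).natDegree ≤ k + 1 := by
    have := natDegree_mul_le_of_le (natDegree_X_le (R := ℝ)) hp
    omega
  refine natDegree_sub_le_of_le (m := k + 1) (n := k + 1) ?_ ?_ |>.trans (by simp)
  · refine natDegree_add_le_of_degree_le ?_ ?_
    · exact (natDegree_mul_le_of_le ((natDegree_C_mul_le _ _).trans hp) h1X)
    · exact (natDegree_C_mul_le _ _).trans (natDegree_mul_le_of_le
        ((natDegree_X_mul_derivative_le p).trans hp) h1X)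
  · exact (natDegree_C_mul_le _ _).trans hXp

theorem natDegree_derivPoly_le (α : ℝ) : ∀ k, (derivPoly α k).natDegree ≤ k
  | 0 => by simp [derivPoly]
  | k + 1 => natDegree_derivPolyStep_le α (natDegree_derivPoly_le α k)

theorem hasDerivAt_derivTerm {a α x : ℝ} (k : ℕ) (p : ℝ[X]) (hx : 0 < x)
    (hu : 0 < 1 + a * x ^ α) :
    HasDerivAt (derivTerm a α k p) (derivTerm a α (k + 1) (derivPolyStep α k p) x) x := by
  have hU : HasDerivAt (fun x : ℝ => a * x ^ α) (α * (a * x ^ α) / x) x := by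
    refine ((hasDerivAt_rpow_const (p := α) (Or.inl hx.ne')).const_mul a).congr_deriv ?_
    rw [rpow_sub_one hx.ne']
    ring
  have hpow := hasDerivAt_rpow_const (p := 1 - (k : ℝ)) (Or.inl hx.ne')
  have hpoly := (p.hasDerivAt _).comp x hU
  have hbase := (hasDerivAt_rpow_const (p := -(1 / 2 : ℝ) - k) (Or.inl hu.ne')).comp x
    (hU.const_add 1)
  refine ((hpow.fun_mul hpoly).fun_mul hbase).congr_deriv ?_
  have hx_pow : x ^ (1 - (k : ℝ) - 1) = x ^ (1 - (k : ℝ)) / x := rpow_sub_one hx.ne' _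
  have hu_pow : (1 + a * x ^ α) ^ (-(1 / 2 : ℝ) - k - 1) =
      (1 + a * x ^ α) ^ (-(1 / 2 : ℝ) - k) / (1 + a * x ^ α) :=
    rpow_sub_one hu.ne' _
  simp only [derivTerm, derivPolyStep, eval_sub, eval_add, eval_mul, eval_C,
    eval_X, eval_one, Function.comp_apply, Nat.cast_add, Nat.cast_one, sub_add_eq_sub_sub,
    hx_pow, hu_pow]
  field_simp
  ring

theorem derivTerm_zero_one {a α x : ℝ} (hu : 0 ≤ 1 + a * x ^ α) :
    derivTerm a α 0 1 x = x / √(1 + a * x ^ α) := by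
  simp [derivTerm, sqrt_eq_rpow, rpow_neg hu, div_eq_mul_inv]

theorem iteratedDeriv_eqOn_derivTerm {a : ℝ} (ha : 0 ≤ a) (α : ℝ) (k : ℕ) :
    Set.EqOn (iteratedDeriv k fun x => x / √(1 + a * x ^ α)) (derivTerm a α k (derivPoly α k))
      (Set.Ioi 0) := by
  have hu {x : ℝ} (hx : 0 < x) : 0 < 1 + a * x ^ α := by positivity
  induction k with
  | zero => exact fun x hx => (derivTerm_zero_one (hu hx).le).symm
  | succ k ih =>
    intro x hx
    rw [iteratedDeriv_succ, (ih.eventuallyEq_of_mem (isOpen_Ioi.mem_nhds hx)).deriv_eq]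
    exact (hasDerivAt_derivTerm k _ hx (hu hx)).deriv

theorem abs_derivTerm_le {a α x : ℝ} {k : ℕ} {p : ℝ[X]} (ha : 0 < a) (hx : 0 < x)
    (hp : p.natDegree ≤ k) :
    |derivTerm a α k p x| ≤
      (∑ i ∈ Finset.range (k + 1), |p.coeff i|) / √a * x ^ (1 - α / 2 - k) := by
  set S := ∑ i ∈ Finset.range (k + 1), |p.coeff i|
  rw [derivTerm]
  set u := a * x ^ α
  have hu : 0 < u := by positivity
  have h1u : 0 < 1 + u := by positivity
  have hu_pow : (1 + u) ^ (k : ℝ) * (1 + u) ^ (-(1 / 2 : ℝ) - k) = (1 + u) ^ (-(1 / 2 : ℝ)) := by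
    rw [← rpow_add h1u]
    ring_nf
  have hx_pow : x ^ (1 - (k : ℝ)) * x ^ (α * -(1 / 2)) = x ^ (1 - α / 2 - k) := by
    rw [← rpow_add hx]
    ring_nf
  calc |x ^ (1 - (k : ℝ)) * p.eval u * (1 + u) ^ (-(1 / 2 : ℝ) - k)|
      = x ^ (1 - (k : ℝ)) * |p.eval u| * (1 + u) ^ (-(1 / 2 : ℝ) - k) := by
        rw [abs_mul, abs_mul, abs_of_pos (by positivity), abs_of_pos (rpow_pos_of_pos h1u _)]
    _ ≤ x ^ (1 - (k : ℝ)) * (S * (1 + u) ^ k) * (1 + u) ^ (-(1 / 2 : ℝ) - k) := by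
        gcongr
        exact abs_eval_le_of_natDegree_le hp hu.le
    _ = S * x ^ (1 - (k : ℝ)) * (1 + u) ^ (-(1 / 2 : ℝ)) := by
        rw [← rpow_natCast]
        linear_combination S * x ^ (1 - (k : ℝ)) * hu_pow
    _ ≤ S * x ^ (1 - (k : ℝ)) * u ^ (-(1 / 2 : ℝ)) := by
        exact mul_le_mul_of_nonneg_left
          (rpow_le_rpow_of_nonpos hu (by linarith) (by norm_num)) (by positivity)
    _ = S / √a * x ^ (1 - α / 2 - k) := by
        rw [mul_rpow ha.le (by positivity), ← rpow_mul hx.le, rpow_neg ha.le, ← sqrt_eq_rpow,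
          ← hx_pow]
        ring

end EringenSymbol

open EringenSymbol

theorem symbol_h_estimates_general (α : ℝ) (ha : 0 < aCoef α)
    (k : ℕ) :
    ∃ C : ℝ, 0 < C ∧ ∀ ξ : ℝ, 1 ≤ ξ →
      |iteratedDeriv k (fun x : ℝ => x / Real.sqrt (1 + aCoef α * x ^ α)) ξ| ≤
        C * ξ ^ (1 - α / 2 - (k : ℝ)) := by
  set S := ∑ i ∈ Finset.range (k + 1), |(derivPoly α k).coeff i|
  refine ⟨(S + 1) / √(aCoef α), by positivity, fun ξ hξ => ?_⟩
  have hξ : 0 < ξ := by linarith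
  rw [iteratedDeriv_eqOn_derivTerm ha.le α k hξ]
  refine (abs_derivTerm_le ha hξ (natDegree_derivPoly_le α k)).trans ?_
  gcongr
  linarith

/-- For `α ∈ [2,3)` (where `a_α = -cos(απ/2) > 0`) and every `k ∈ ℕ` there is
`C_k > 0` such that for all `ξ ≥ 1` the `k`-th derivative of
`ξ ↦ ξ/√(1 + a_α ξ^α)` is bounded by `C_k ξ^{1-α/2-k}`:
the symbol `h_α` is of order `1 − α/2` and type `(1,0)` for large frequencies. -/
theorem symbol_h_estimates (α : ℝ) (hα : α ∈ Set.Ico (2 : ℝ) 3) (ha : 0 < aCoef α)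
    (k : ℕ) :
    ∃ C : ℝ, 0 < C ∧ ∀ ξ : ℝ, 1 ≤ ξ →
      |iteratedDeriv k (fun x : ℝ => x / Real.sqrt (1 + aCoef α * x ^ α)) ξ| ≤
        C * ξ ^ (1 - α / 2 - (k : ℝ)) :=
  symbol_h_estimates_general α ha k
end

section
/- Let α ∈ [2,3) and a_α := −cos(απ/2) > 0. For every k ∈ ℕ there exists a constant C_k > 0 such that for all ξ ≥ 1, the k-th derivative of the function ξ ↦ √(1 + a_α ξ^α) satisfies |d^k/dξ^k √(1 + a_α ξ^α)| ≤ C_k · ξ^{α/2 − k}. -/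
open Real

/-!
Every derivative of `√(1 + a x^α)` is a linear combination of terms `x^b (1 + a x^α)^c`, and
differentiating such a term lowers its order `b + α c` by exactly one, so the `k`-th derivative
is a combination of terms of order `α/2 - k`. For `x ≥ 1` the base `1 + a x^α` lies between
`a x^α` and `(1 + a) x^α`, so a term of order `m` is bounded by a constant times `x^m`.
-/

open Set

noncomputable def symbolTerm (a α b c x : ℝ) : ℝ := x ^ b * (1 + a * x ^ α) ^ c

noncomputable def homogeneousSymbols (a α m : ℝ) : Submodule ℝ (ℝ → ℝ) :=
  Submodule.span ℝ {f | ∃ b c, b + α * c = m ∧ f = symbolTerm a α b c}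

section

variable {a α b c m x : ℝ}

theorem symbolTerm_mem_homogeneousSymbols (h : b + α * c = m) :
    symbolTerm a α b c ∈ homogeneousSymbols a α m :=
  Submodule.subset_span ⟨b, c, h, rfl⟩

theorem hasDerivAt_symbolTerm (ha : 0 ≤ a) (hx : 0 < x) :
    HasDerivAt (symbolTerm a α b c)
      (b * symbolTerm a α (b - 1) c x + c * a * α * symbolTerm a α (b + α - 1) (c - 1) x) x := by
  have hbase : 0 < 1 + a * x ^ α := by positivity
  have hinner : HasDerivAt (fun y => 1 + a * y ^ α) (a * (α * x ^ (α - 1))) x :=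
    ((hasDerivAt_rpow_const (Or.inl hx.ne')).const_mul a).const_add 1
  refine ((hasDerivAt_rpow_const (p := b) (Or.inl hx.ne')).mul
    (hinner.rpow_const (p := c) (Or.inl hbase.ne'))).congr_deriv ?_
  rw [symbolTerm, symbolTerm, show b + α - 1 = b + (α - 1) by ring, rpow_add hx]
  ring

theorem exists_hasDerivAt_mem_homogeneousSymbols (ha : 0 ≤ a) {f : ℝ → ℝ}
    (hf : f ∈ homogeneousSymbols a α m) :
    ∃ g ∈ homogeneousSymbols a α (m - 1), ∀ x, 0 < x → HasDerivAt f (g x) x := by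
  induction hf using Submodule.span_induction with
  | mem f hf =>
    obtain ⟨b, c, hm, rfl⟩ := hf
    refine ⟨fun x => b * symbolTerm a α (b - 1) c x +
      c * a * α * symbolTerm a α (b + α - 1) (c - 1) x, ?_, fun x hx => hasDerivAt_symbolTerm ha hx⟩
    exact add_mem (Submodule.smul_mem _ b (symbolTerm_mem_homogeneousSymbols (by linarith)))
      (Submodule.smul_mem _ (c * a * α) (symbolTerm_mem_homogeneousSymbols (by linarith)))
  | zero => exact ⟨0, zero_mem _, fun x _ => hasDerivAt_const x 0⟩
  | add f₁ f₂ _ _ h₁ h₂ =>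
    obtain ⟨g₁, hg₁, hd₁⟩ := h₁
    obtain ⟨g₂, hg₂, hd₂⟩ := h₂
    exact ⟨g₁ + g₂, add_mem hg₁ hg₂, fun x hx => (hd₁ x hx).add (hd₂ x hx)⟩
  | smul r f _ h =>
    obtain ⟨g, hg, hd⟩ := h
    exact ⟨r • g, Submodule.smul_mem _ r hg, fun x hx => (hd x hx).const_mul r⟩

theorem exists_eqOn_iteratedDeriv_mem_homogeneousSymbols (ha : 0 ≤ a) {f : ℝ → ℝ}
    (hf : f ∈ homogeneousSymbols a α m) (k : ℕ) :
    ∃ g ∈ homogeneousSymbols a α (m - k), EqOn (iteratedDeriv k f) g (Ioi 0) := by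
  induction k with
  | zero => exact ⟨f, by simpa using hf, fun x _ => rfl⟩
  | succ k ih =>
    obtain ⟨g, hg, hfg⟩ := ih
    obtain ⟨g', hg', hd⟩ := exists_hasDerivAt_mem_homogeneousSymbols ha hg
    refine ⟨g', by simpa [sub_sub] using hg', fun x (hx : 0 < x) => ?_⟩
    rw [iteratedDeriv_succ, (hfg.eventuallyEq_of_mem (Ioi_mem_nhds hx)).deriv_eq]
    exact (hd x hx).deriv

theorem rpow_le_add_rpow_of_mem_Icc {y z : ℝ} (ha : 0 < a) (hy : y ∈ Icc a z) (c : ℝ) :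
    y ^ c ≤ a ^ c + z ^ c := by
  rcases le_total 0 c with hc | hc
  · have := rpow_le_rpow (ha.le.trans hy.1) hy.2 hc
    linarith [rpow_nonneg (ha.le) c]
  · have := rpow_le_rpow_of_nonpos ha hy.1 hc
    linarith [rpow_nonneg (ha.le.trans (hy.1.trans hy.2)) c]

theorem symbolTerm_le (ha : 0 < a) (hα : 0 ≤ α) (hx : 1 ≤ x) :
    symbolTerm a α b c x ≤ (a ^ c + (1 + a) ^ c) * x ^ (b + α * c) := by
  have hx0 : 0 < x := one_pos.trans_le hx
  have hxα : 1 ≤ x ^ α := one_le_rpow hx hα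
  set y := (1 + a * x ^ α) / x ^ α
  have hy : y ∈ Icc a (1 + a) := by
    constructor
    · rw [le_div_iff₀ (by positivity)]; linarith
    · rw [div_le_iff₀ (by positivity)]; nlinarith
  have hbase : 1 + a * x ^ α = y * x ^ α := by
    rw [div_mul_cancel₀ _ (by positivity)]
  rw [symbolTerm, hbase, mul_rpow (ha.le.trans hy.1) (by positivity), ← rpow_mul hx0.le,
    rpow_add hx0]
  have := rpow_le_add_rpow_of_mem_Icc ha hy c
  have : 0 ≤ x ^ b * x ^ (α * c) := by positivity
  nlinarith

theorem exists_abs_le_of_mem_homogeneousSymbols (ha : 0 < a) (hα : 0 ≤ α) {f : ℝ → ℝ}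
    (hf : f ∈ homogeneousSymbols a α m) :
    ∃ C, ∀ x, 1 ≤ x → |f x| ≤ C * x ^ m := by
  induction hf using Submodule.span_induction with
  | mem f hf =>
    obtain ⟨b, c, rfl, rfl⟩ := hf
    refine ⟨a ^ c + (1 + a) ^ c, fun x hx => ?_⟩
    have hx0 : 0 < x := one_pos.trans_le hx
    rw [abs_of_nonneg (by unfold symbolTerm; positivity)]
    exact symbolTerm_le ha hα hx
  | zero => exact ⟨0, fun x _ => by simp⟩
  | add f₁ f₂ _ _ h₁ h₂ =>
    obtain ⟨C₁, h₁⟩ := h₁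
    obtain ⟨C₂, h₂⟩ := h₂
    refine ⟨C₁ + C₂, fun x hx => ?_⟩
    calc |(f₁ + f₂) x| ≤ |f₁ x| + |f₂ x| := abs_add_le _ _
      _ ≤ (C₁ + C₂) * x ^ m := by linarith [h₁ x hx, h₂ x hx]
  | smul r f _ h =>
    obtain ⟨C, h⟩ := h
    refine ⟨|r| * C, fun x hx => ?_⟩
    rw [Pi.smul_apply, smul_eq_mul, abs_mul, mul_assoc]
    exact mul_le_mul_of_nonneg_left (h x hx) (abs_nonneg r)

end

/-- For `α ∈ [2,3)` (where `a_α = -cos(απ/2) > 0`) and every `k ∈ ℕ` there is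
`C_k > 0` such that for all `ξ ≥ 1` the `k`-th derivative of `ξ ↦ √(1 + a_α ξ^α)`
is bounded by `C_k ξ^{α/2-k}`: away from `ξ = 0` the symbol of `B_x^α` belongs to
the class `S^{α/2}`. -/
theorem symbol_g_estimates (α : ℝ) (hα : α ∈ Set.Ico (2 : ℝ) 3) (ha : 0 < aCoef α)
    (k : ℕ) :
    ∃ C : ℝ, 0 < C ∧ ∀ ξ : ℝ, 1 ≤ ξ →
      |iteratedDeriv k (fun x : ℝ => Real.sqrt (1 + aCoef α * x ^ α)) ξ| ≤
        C * ξ ^ (α / 2 - (k : ℝ)) := by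
  have hsqrt : (fun x : ℝ => √(1 + aCoef α * x ^ α)) = symbolTerm (aCoef α) α 0 (1 / 2) := by
    funext x
    rw [symbolTerm, rpow_zero, one_mul, sqrt_eq_rpow]
  obtain ⟨g, hg, hEq⟩ := exists_eqOn_iteratedDeriv_mem_homogeneousSymbols ha.le
    (symbolTerm_mem_homogeneousSymbols (a := aCoef α) (show 0 + α * (1 / 2) = α / 2 by ring)) k
  obtain ⟨C, hC⟩ := exists_abs_le_of_mem_homogeneousSymbols ha (by linarith [hα.1]) hg
  refine ⟨max C 1, one_pos.trans_le (le_max_right C 1), fun ξ hξ => ?_⟩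
  rw [hsqrt, hEq (one_pos.trans_le hξ)]
  exact (hC ξ hξ).trans
    (mul_le_mul_of_nonneg_right (le_max_left C 1) (rpow_nonneg (by linarith) _))
end
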